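/- The function ν ↦ κ_ν is strictly increasing on (0,1): if 0 < ν₁ < ν₂ < 1 then κ_{ν₁} < κ_{ν₂}. -/

import Mathlib

/-!
With `a = (v + 1)² / v > v ≥ 1` the integrand is `(a^ν - v^ν) / v`, and `ν ↦ a^ν - v^ν` is strictly
increasing on `[0, ∞)` because `a^ν (a^δ - 1) > v^ν (v^δ - 1)` for `δ > 0`. For `ν ≤ 1` the tangent
line of the concave map `x ↦ x^ν` at `v` bounds the integrand by `3 v^(ν-2)`, which is integrable on
`[1, ∞)` when `ν < 1`; the strict inequality between the integrands then passes to the integrals.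
-/

open MeasureTheory

/-- `κ_ν = ∫_1^∞ ((v+1)^{2ν} − v^{2ν})/v^{ν+1} dv`. -/
noncomputable def kappa (ν : ℝ) : ℝ :=
  ∫ v in Set.Ici (1 : ℝ), ((v + 1) ^ (2 * ν) - v ^ (2 * ν)) / v ^ (ν + 1)

theorem MeasureTheory.setIntegral_lt_setIntegral {X : Type*} [MeasurableSpace X] {μ : Measure X}
    {s : Set X} {f g : X → ℝ} (hs : MeasurableSet s) (hμs : μ s ≠ 0)
    (hf : IntegrableOn f s μ) (hg : IntegrableOn g s μ) (hlt : ∀ x ∈ s, f x < g x) :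
    ∫ x in s, f x ∂μ < ∫ x in s, g x ∂μ := by
  rw [← sub_pos, ← integral_sub hg hf]
  refine (setIntegral_pos_iff_support_of_nonneg_ae (f := g - f) ?_ (hg.sub hf)).2 ?_
  · filter_upwards [ae_restrict_mem hs] with x hx
    exact (sub_pos.2 (hlt x hx)).le
  · refine hμs.bot_lt.trans_le (measure_mono fun x hx ↦ ⟨?_, hx⟩)
    exact (sub_pos.2 (hlt x hx)).ne'

namespace Real

theorem rpow_sub_rpow_lt_rpow_sub_rpow {a b p q : ℝ} (hb : 1 ≤ b) (hba : b < a) (hp : 0 ≤ p)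
    (hpq : p < q) : a ^ p - b ^ p < a ^ q - b ^ q := by
  have hb0 : 0 < b := one_pos.trans_le hb
  have ha0 : 0 < a := hb0.trans hba
  have hp_pow : b ^ p ≤ a ^ p := rpow_le_rpow hb0.le hba.le hp
  have hqp_pow : b ^ (q - p) < a ^ (q - p) := rpow_lt_rpow hb0.le hba (sub_pos.2 hpq)
  have hb_pow : 1 ≤ b ^ p := one_le_rpow hb hp
  have hb_qp : 1 ≤ b ^ (q - p) := one_le_rpow hb (sub_pos.2 hpq).le
  have hsplit : ∀ x : ℝ, 0 < x → x ^ q = x ^ p * x ^ (q - p) := fun x hx ↦ by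
    rw [← rpow_add hx, add_sub_cancel]
  rw [hsplit a ha0, hsplit b hb0]
  nlinarith

theorem rpow_sub_rpow_le_mul_sub {a b p : ℝ} (ha : 0 ≤ a) (hb : 0 < b) (hp0 : 0 ≤ p)
    (hp1 : p ≤ 1) : a ^ p - b ^ p ≤ p * b ^ (p - 1) * (a - b) := by
  have hs : -1 ≤ a / b - 1 := by linarith [div_nonneg ha hb.le]
  have hber := rpow_one_add_le_one_add_mul_self hs hp0 hp1
  rw [add_sub_cancel, div_rpow ha hb.le, div_le_iff₀ (rpow_pos_of_pos hb p)] at hber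
  rw [rpow_sub_one hb.ne']
  calc a ^ p - b ^ p ≤ (1 + p * (a / b - 1)) * b ^ p - b ^ p := by linarith
    _ = p * (b ^ p / b) * (a - b) := by field_simp; ring

end Real

open Set Real

noncomputable def kappaIntegrand (ν v : ℝ) : ℝ :=
  ((v + 1) ^ (2 * ν) - v ^ (2 * ν)) / v ^ (ν + 1)

theorem kappa_eq_integral_kappaIntegrand (ν : ℝ) :
    kappa ν = ∫ v in Ici 1, kappaIntegrand ν v := rfl

@[simp]
theorem kappaIntegrand_zero (v : ℝ) : kappaIntegrand 0 v = 0 := by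
  simp [kappaIntegrand]

theorem kappaIntegrand_eq {ν v : ℝ} (hv : 0 < v) :
    kappaIntegrand ν v = (((v + 1) ^ 2 / v) ^ ν - v ^ ν) / v := by
  have hnum : (v + 1) ^ (2 * ν) = ((v + 1) ^ 2 / v) ^ ν * v ^ ν := by
    rw [div_rpow (by positivity) hv.le, div_mul_cancel₀ _ (rpow_pos_of_pos hv ν).ne',
      ← rpow_natCast_mul (by positivity)]
    norm_num
  rw [kappaIntegrand, hnum, two_mul, rpow_add hv, rpow_add hv, rpow_one]
  field_simp

theorem lt_add_one_sq_div {v : ℝ} (hv : 0 < v) : v < (v + 1) ^ 2 / v := by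
  rw [lt_div_iff₀ hv]
  nlinarith

theorem kappaIntegrand_strictMonoOn {v : ℝ} (hv : 1 ≤ v) :
    StrictMonoOn (kappaIntegrand · v) (Ici 0) := by
  intro ν₁ hν₁ ν₂ _ h12
  have hv0 : 0 < v := one_pos.trans_le hv
  simp only [kappaIntegrand_eq hv0]
  exact div_lt_div_of_pos_right
    (rpow_sub_rpow_lt_rpow_sub_rpow hv (lt_add_one_sq_div hv0) hν₁ h12) hv0

theorem kappaIntegrand_nonneg {ν v : ℝ} (hv : 1 ≤ v) (hν : 0 ≤ ν) : 0 ≤ kappaIntegrand ν v := by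
  simpa using (kappaIntegrand_strictMonoOn hv).monotoneOn self_mem_Ici hν hν

theorem kappaIntegrand_le {ν v : ℝ} (hv : 1 ≤ v) (hν0 : 0 ≤ ν) (hν1 : ν ≤ 1) :
    kappaIntegrand ν v ≤ 3 * v ^ (ν - 2) := by
  have hv0 : 0 < v := one_pos.trans_le hv
  have hgap0 : 0 ≤ (v + 1) ^ 2 / v - v := sub_nonneg.2 (lt_add_one_sq_div hv0).le
  have hgap : (v + 1) ^ 2 / v - v ≤ 3 := by
    rw [div_sub' hv0.ne', div_le_iff₀ hv0]
    nlinarith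
  rw [kappaIntegrand_eq hv0, div_le_iff₀ hv0, show ν - 2 = ν - 1 - 1 by ring,
    rpow_sub_one hv0.ne', mul_assoc, div_mul_cancel₀ _ hv0.ne']
  calc ((v + 1) ^ 2 / v) ^ ν - v ^ ν ≤ ν * v ^ (ν - 1) * ((v + 1) ^ 2 / v - v) :=
        rpow_sub_rpow_le_mul_sub (by positivity) hv0 hν0 hν1
    _ ≤ 1 * v ^ (ν - 1) * 3 := by gcongr
    _ = 3 * v ^ (ν - 1) := by ring

theorem integrableOn_kappaIntegrand {ν : ℝ} (hν0 : 0 ≤ ν) (hν1 : ν < 1) :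
    IntegrableOn (kappaIntegrand ν) (Ici 1) := by
  have hmajorant : IntegrableOn (fun v : ℝ ↦ 3 * v ^ (ν - 2)) (Ici 1) := by
    rw [integrableOn_Ici_iff_integrableOn_Ioi]
    exact (integrableOn_Ioi_rpow_of_lt (by linarith) one_pos).const_mul 3
  refine hmajorant.mono' (by unfold kappaIntegrand; fun_prop : Measurable _).aestronglyMeasurable ?_
  filter_upwards [ae_restrict_mem measurableSet_Ici] with v hv
  rw [norm_of_nonneg (kappaIntegrand_nonneg hv hν0)]
  exact kappaIntegrand_le hv hν0 hν1.le

theorem stmt_7 (ν₁ ν₂ : ℝ) (h0 : 0 < ν₁) (h12 : ν₁ < ν₂) (h1 : ν₂ < 1) :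
    kappa ν₁ < kappa ν₂ := by
  have hν₂ : 0 ≤ ν₂ := h0.le.trans h12.le
  simp only [kappa_eq_integral_kappaIntegrand]
  exact setIntegral_lt_setIntegral measurableSet_Ici (by simp)
    (integrableOn_kappaIntegrand h0.le (h12.trans h1)) (integrableOn_kappaIntegrand hν₂ h1)
    fun v hv ↦ kappaIntegrand_strictMonoOn hv h0.le hν₂ h12
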